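/- arXiv:1403.4157 — 2 statements merged into one kernel-verified Lean document; each statement's English description precedes it below -/
import Mathlib

section
/- Let H be a block matrix of size Σ × ℓΣ over a field, partitioned into row blocks so that the first row block H₁ has n₁−1 rows and the second row block H₂ has m = Σ−(n₁−1) rows, and partitioned columnwise into ℓ copies of Σ columns each, where in each such column group the columns split as (n₁−1) columns and m columns. Suppose that in every column group, the (n₁−1)×(n₁−1) diagonal sub-block of H₁ is zero and the m×m diagonal sub-block of H₂ is zero. If n₁−1 > ℓ·m, then rank(H) ≤ (ℓ+1)·m. -/
/-! The rank of a matrix is at most the number of rows and columns needed to cover its support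
(split the matrix into the part on the chosen columns and the rest). Since the columns `(l, inl j)`
vanish on the rows `inl i`, the support of `H` is covered by the `m` rows `inr i` together with
the `ℓ·m` columns `(l, inr j)`. -/

namespace Matrix

variable {F : Type*} [Field F] {m n : Type*} [Fintype n]

theorem rank_add_le (A B : Matrix m n F) : (A + B).rank ≤ A.rank + B.rank := by
  rw [rank, rank, rank, mulVecLin_add]
  exact (Submodule.finrank_mono (LinearMap.range_add_le _ _)).trans
    (Submodule.finrank_add_le_finrank_add_finrank _ _)

theorem rank_le_card_of_support_col_subset [Fintype m] (A : Matrix m n F) (s : Finset n)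
    (hz : Function.support A.col ⊆ s) : A.rank ≤ s.card := by
  rw [← rank_transpose]
  exact Aᵀ.rank_le_card_of_support_subset s hz

theorem rank_le_card_add_card_of_support_cover [Fintype m] [DecidableEq n] (A : Matrix m n F)
    (R : Finset m) (C : Finset n) (hA : ∀ i j, i ∉ R → j ∉ C → A i j = 0) :
    A.rank ≤ R.card + C.card := by
  set A₁ : Matrix m n F := of fun i j => if j ∈ C then 0 else A i j
  set A₂ : Matrix m n F := of fun i j => if j ∈ C then A i j else 0
  have hsplit : A = A₁ + A₂ := by
    ext i j
    by_cases hj : j ∈ C <;> simp [A₁, A₂, hj]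
  have hA₁ : A₁.rank ≤ R.card := by
    refine A₁.rank_le_card_of_support_subset R fun i hi => ?_
    by_contra hiR
    refine hi (funext fun j => ?_)
    by_cases hj : j ∈ C <;> simp [A₁, hj, hA i j hiR]
  have hA₂ : A₂.rank ≤ C.card := by
    refine A₂.rank_le_card_of_support_col_subset C fun j hj => ?_
    by_contra hjC
    exact hj (funext fun i => by simp [A₂, col, Finset.mem_coe.not.mp hjC])
  calc A.rank = (A₁ + A₂).rank := by rw [← hsplit]
    _ ≤ A₁.rank + A₂.rank := rank_add_le A₁ A₂
    _ ≤ R.card + C.card := add_le_add hA₁ hA₂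

end Matrix

theorem stmt0_general {F : Type*} [Field F] (n₁ m ℓ : ℕ)
    (H : Matrix (Fin (n₁ - 1) ⊕ Fin m) (Fin ℓ × (Fin (n₁ - 1) ⊕ Fin m)) F)
    (h₁ : ∀ (l : Fin ℓ) (i j : Fin (n₁ - 1)), H (Sum.inl i) (l, Sum.inl j) = 0) :
    H.rank ≤ (ℓ + 1) * m := by
  classical
  let rows : Finset (Fin (n₁ - 1) ⊕ Fin m) := Finset.univ.map Function.Embedding.inr
  let cols : Finset (Fin ℓ × (Fin (n₁ - 1) ⊕ Fin m)) :=
    Finset.univ.map (Function.Embedding.prodMap (Function.Embedding.refl _) Function.Embedding.inr)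
  have hcover : ∀ i c, i ∉ rows → c ∉ cols → H i c = 0 := by
    rintro (i | i) ⟨l, j | j⟩ hi hc
    · exact h₁ l i j
    all_goals simp [rows, cols] at hi hc
  calc H.rank ≤ rows.card + cols.card := H.rank_le_card_add_card_of_support_cover rows cols hcover
    _ = (ℓ + 1) * m := by
      simp only [rows, cols, Finset.card_map, Finset.card_univ, Fintype.card_fin,
        Fintype.card_prod]
      ring

/-- Lemma 2.4 (hessianconditions), abstracted: a `Σ × ℓΣ` block matrix (with
`Σ = (n₁-1) + m`) whose diagonal blocks in each of the `ℓ` column groups vanish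
has rank at most `(ℓ+1)·m` provided `n₁ - 1 > ℓ·m`. -/
theorem stmt0 {F : Type*} [Field F] (n₁ m ℓ : ℕ) (hℓ : 1 ≤ ℓ)
    (H : Matrix (Fin (n₁ - 1) ⊕ Fin m) (Fin ℓ × (Fin (n₁ - 1) ⊕ Fin m)) F)
    (h₁ : ∀ (l : Fin ℓ) (i j : Fin (n₁ - 1)), H (Sum.inl i) (l, Sum.inl j) = 0)
    (h₂ : ∀ (l : Fin ℓ) (i j : Fin m), H (Sum.inr i) (l, Sum.inr j) = 0)
    (hbig : ℓ * m < n₁ - 1) :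
    H.rank ≤ (ℓ + 1) * m :=
  stmt0_general n₁ m ℓ H h₁
end

section
/- Young flattening is subadditive in rank: if a tensor A ∈ F^{n₁} ⊗ F^{n₂} ⊗ F^{n₃} is a sum of r rank-one tensors, then the linear map A_A : F^{n₁} ⊗ Λ^p F^{n₃} → F^{n₂} ⊗ Λ^{p+1} F^{n₃}, defined on rank-one tensors a₁⊗a₂⊗a₃ by (f ⊗ g) ↦ (a₁·f)·(a₂ ⊗ (g ∧ a₃)) and extended linearly in A, satisfies rank(A_A) ≤ r · C(n₃−1, p). -/
open scoped TensorProduct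

set_option synthInstance.maxHeartbeats 1000000
set_option maxHeartbeats 1000000
set_option maxSynthPendingDepth 3

/-- Wedging on the right with a fixed vector `w`, as a linear map
`⋀^p V →ₗ ⋀^(p+1) V`. -/
noncomputable def wedgeMap (F : Type*) [Field F] {V : Type*} [AddCommGroup V]
    [Module F V] (p : ℕ) (w : V) : ⋀[F]^p V →ₗ[F] ⋀[F]^(p+1) V :=
  (LinearMap.mulRight F (ExteriorAlgebra.ι F w)).restrict fun x hx => by
    have h : (⋀[F]^(p+1) V : Submodule F (ExteriorAlgebra F V)) =
        ⋀[F]^p V * LinearMap.range (ExteriorAlgebra.ι F (M := V)) := pow_succ _ p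
    rw [h]
    exact Submodule.mul_mem_mul hx (LinearMap.mem_range_self _ w)

/-!
Since `Φ` is linear, `rank (Φ A)` is at most the sum of the ranks of the `Φ (aᵢ ⊗ bᵢ ⊗ cᵢ)`,
each of which is the tensor product of a map of rank at most one with wedging by `cᵢ`.
For `cᵢ ≠ 0`, extend `cᵢ` to a basis `e` of `F^{n₃}`: in the induced basis `e_S` of `⋀^p`,
`e_S ∧ cᵢ` vanishes as soon as the index of `cᵢ` lies in `S`, so the range of wedging by `cᵢ`
is spanned by `C(n₃ - 1, p)` vectors.
-/

open Module

section Wedge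

variable {F V : Type*} [Field F] [AddCommGroup V] [Module F V]

lemma wedgeMap_apply_coe (p : ℕ) (w : V) (x : ⋀[F]^p V) :
    (wedgeMap F p w x : ExteriorAlgebra F V) = x * ExteriorAlgebra.ι F w :=
  rfl

lemma wedgeMap_zero (p : ℕ) : wedgeMap F p (0 : V) = 0 := by
  ext x
  simp [wedgeMap_apply_coe]

lemma wedgeMap_ιMulti_eq_zero {p : ℕ} {v : Fin p → V} {w : V} (hw : w ∈ Set.range v) :
    wedgeMap F p w (exteriorPower.ιMulti F p v) = 0 := by
  obtain ⟨k, rfl⟩ := hw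
  ext
  have hι : ExteriorAlgebra.ι F (v k) = ExteriorAlgebra.ιMulti F 1 ![v k] := by
    simp [ExteriorAlgebra.ιMulti_succ_apply, ExteriorAlgebra.ιMulti_zero_apply]
  rw [wedgeMap_apply_coe, exteriorPower.ιMulti_apply_coe, hι, ExteriorAlgebra.ιMulti_mul_ιMulti]
  exact AlternatingMap.map_eq_zero_of_eq _ _ (i := Fin.castAdd 1 k) (j := Fin.natAdd p 0)
    (by simp) (by simp [Fin.ext_iff, k.is_lt.ne])

lemma wedgeMap_basis_eq_zero {p : ℕ} {I : Type*} [LinearOrder I] (b : Basis I F V) {i : I}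
    {s : Set.powersetCard I p} (hi : i ∈ s) : wedgeMap F p (b i) (b.exteriorPower p s) = 0 := by
  rw [exteriorPower.basis_apply]
  apply wedgeMap_ιMulti_eq_zero
  obtain ⟨k, hk⟩ := (Set.powersetCard.mem_range_ofFinEmbEquiv_symm_iff_mem s i).mpr hi
  exact ⟨k, by simp [hk]⟩

lemma finrank_range_wedgeMap_basis_le {p : ℕ} {I : Type*} [LinearOrder I] [Fintype I]
    (b : Basis I F V) (i : I) :
    finrank F (LinearMap.range (wedgeMap F p (b i))) ≤ (Fintype.card I - 1).choose p := by
  classical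
  let T : Finset (Set.powersetCard I p) := Finset.univ.filter fun s => i ∉ s
  have hrange : LinearMap.range (wedgeMap F p (b i)) ≤
      Submodule.span F (T.image fun s => wedgeMap F p (b i) (b.exteriorPower p s) : Set _) := by
    rw [LinearMap.range_eq_map, ← (b.exteriorPower p).span_eq, Submodule.map_span,
      Submodule.span_le]
    rintro _ ⟨_, ⟨s, rfl⟩, rfl⟩
    by_cases hi : i ∈ s
    · rw [wedgeMap_basis_eq_zero b hi]
      exact zero_mem _
    · exact Submodule.subset_span (Finset.mem_image_of_mem _ (by simp [T, hi]))
  have hT : T.card ≤ (Fintype.card I - 1).choose p := by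
    calc T.card ≤ ((Finset.univ.erase i).powersetCard p).card :=
          Finset.card_le_card_of_injOn (fun s => (s : Finset I))
            (fun s hs => Finset.mem_powersetCard.2
              ⟨Finset.subset_erase.2 ⟨Finset.subset_univ _, (by simpa [T] using hs : i ∉ s)⟩, s.2⟩)
            (fun s _ t _ h => Subtype.ext h)
      _ = (Fintype.card I - 1).choose p := by simp
  calc finrank F (LinearMap.range (wedgeMap F p (b i)))
      ≤ (T.image fun s => wedgeMap F p (b i) (b.exteriorPower p s)).card :=
        (Submodule.finrank_mono hrange).trans (finrank_span_finset_le_card _)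
    _ ≤ T.card := Finset.card_image_le
    _ ≤ _ := hT

lemma finrank_range_wedgeMap_le [FiniteDimensional F V] (p : ℕ) (w : V) :
    finrank F (LinearMap.range (wedgeMap F p w)) ≤ (finrank F V - 1).choose p := by
  classical
  rcases eq_or_ne w 0 with rfl | hw
  · rw [wedgeMap_zero, LinearMap.range_zero, finrank_bot]
    exact Nat.zero_le _
  have hli : LinearIndepOn F id ({w} : Set V) := .singleton hw
  let b := Basis.extend hli
  let : LinearOrder (hli.extend (Set.subset_univ _)) := linearOrderOfSTO WellOrderingRel
  let : Fintype (hli.extend (Set.subset_univ _)) := FiniteDimensional.fintypeBasisIndex b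
  have hb : b ⟨w, hli.subset_extend _ rfl⟩ = w := Basis.extend_apply_self hli _
  rw [← hb, finrank_eq_card_basis b]
  exact finrank_range_wedgeMap_basis_le b _

end Wedge

section RankBounds

variable {K M N P Q ι : Type*} [Field K] [AddCommGroup M] [Module K M] [AddCommGroup N]
  [Module K N] [AddCommGroup P] [Module K P] [AddCommGroup Q] [Module K Q]

lemma finrank_range_sum_le [FiniteDimensional K P] (s : Finset ι) (f : ι → M →ₗ[K] P) :
    finrank K (LinearMap.range (∑ i ∈ s, f i)) ≤ ∑ i ∈ s, finrank K (LinearMap.range (f i)) := by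
  have h := LinearMap.rank_finsetSum_le s f
  simp only [LinearMap.rank, ← finrank_eq_rank] at h
  exact_mod_cast h

lemma finrank_range_map_le [FiniteDimensional K P] [FiniteDimensional K Q]
    (f : M →ₗ[K] P) (g : N →ₗ[K] Q) :
    finrank K (LinearMap.range (TensorProduct.map f g)) ≤
      finrank K (LinearMap.range f) * finrank K (LinearMap.range g) := by
  have h : LinearMap.range (TensorProduct.map f g) =
      LinearMap.range (TensorProduct.mapIncl (LinearMap.range f) (LinearMap.range g)) := by
    rw [TensorProduct.range_map, TensorProduct.range_mapIncl]
  rw [h, ← finrank_tensorProduct]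
  exact LinearMap.finrank_range_le _

lemma finrank_range_toSpanSingleton_comp_le_one (f : M →ₗ[K] K) (x : P) :
    finrank K (LinearMap.range ((LinearMap.toSpanSingleton K P x).comp f)) ≤ 1 :=
  (Submodule.finrank_mono (LinearMap.range_comp_le_range _ _)).trans
    ((LinearMap.finrank_range_le _).trans (finrank_self K).le)

end RankBounds

theorem stmt7_general {F : Type*} [Field F] (n₁ n₂ n₃ p r : ℕ)
    (Φ : ((Fin n₁ → F) ⊗[F] ((Fin n₂ → F) ⊗[F] (Fin n₃ → F))) →ₗ[F]
      (((Fin n₁ → F) ⊗[F] ⋀[F]^p (Fin n₃ → F)) →ₗ[F]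
        ((Fin n₂ → F) ⊗[F] ⋀[F]^(p+1) (Fin n₃ → F))))
    (hΦ : ∀ (a₁ : Fin n₁ → F) (a₂ : Fin n₂ → F) (a₃ : Fin n₃ → F),
      Φ (a₁ ⊗ₜ[F] (a₂ ⊗ₜ[F] a₃)) =
        TensorProduct.map
          ((LinearMap.toSpanSingleton F (Fin n₂ → F) a₂).comp
            (∑ i, a₁ i • (LinearMap.proj i : (Fin n₁ → F) →ₗ[F] F)))
          (wedgeMap F p a₃))
    (A : (Fin n₁ → F) ⊗[F] ((Fin n₂ → F) ⊗[F] (Fin n₃ → F)))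
    (a : Fin r → Fin n₁ → F) (b : Fin r → Fin n₂ → F) (c : Fin r → Fin n₃ → F)
    (hA : A = ∑ i, a i ⊗ₜ[F] (b i ⊗ₜ[F] c i)) :
    Module.finrank F (LinearMap.range (Φ A)) ≤ r * (n₃ - 1).choose p := by
  have hterm (i : Fin r) :
      finrank F (LinearMap.range (Φ (a i ⊗ₜ[F] (b i ⊗ₜ[F] c i)))) ≤ (n₃ - 1).choose p := by
    rw [hΦ]
    calc _ ≤ 1 * (finrank F (Fin n₃ → F) - 1).choose p :=
          (finrank_range_map_le _ _).trans (Nat.mul_le_mul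
            (finrank_range_toSpanSingleton_comp_le_one _ _) (finrank_range_wedgeMap_le p _))
      _ = (n₃ - 1).choose p := by rw [one_mul, finrank_fin_fun]
  calc finrank F (LinearMap.range (Φ A))
      ≤ ∑ i, finrank F (LinearMap.range (Φ (a i ⊗ₜ[F] (b i ⊗ₜ[F] c i)))) := by
        rw [hA, map_sum]
        exact finrank_range_sum_le _ _
    _ ≤ ∑ _i : Fin r, (n₃ - 1).choose p := Finset.sum_le_sum fun i _ => hterm i
    _ = r * (n₃ - 1).choose p := by simp

/-- Subadditivity of the Young flattening: if `Φ` is the linear extension of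
`a₁⊗a₂⊗a₃ ↦ (f ⊗ g ↦ (a₁·f)·(a₂ ⊗ (g ∧ a₃)))` and the tensor `A` is a sum of
`r` rank-one tensors, then `rank (Φ A) ≤ r · C(n₃-1, p)`. -/
theorem stmt7 {F : Type*} [Field F] (n₁ n₂ n₃ p r : ℕ) (hp : p ≤ n₃ - 1)
    (Φ : ((Fin n₁ → F) ⊗[F] ((Fin n₂ → F) ⊗[F] (Fin n₃ → F))) →ₗ[F]
      (((Fin n₁ → F) ⊗[F] ⋀[F]^p (Fin n₃ → F)) →ₗ[F]
        ((Fin n₂ → F) ⊗[F] ⋀[F]^(p+1) (Fin n₃ → F))))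
    (hΦ : ∀ (a₁ : Fin n₁ → F) (a₂ : Fin n₂ → F) (a₃ : Fin n₃ → F),
      Φ (a₁ ⊗ₜ[F] (a₂ ⊗ₜ[F] a₃)) =
        TensorProduct.map
          ((LinearMap.toSpanSingleton F (Fin n₂ → F) a₂).comp
            (∑ i, a₁ i • (LinearMap.proj i : (Fin n₁ → F) →ₗ[F] F)))
          (wedgeMap F p a₃))
    (A : (Fin n₁ → F) ⊗[F] ((Fin n₂ → F) ⊗[F] (Fin n₃ → F)))
    (a : Fin r → Fin n₁ → F) (b : Fin r → Fin n₂ → F) (c : Fin r → Fin n₃ → F)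
    (hA : A = ∑ i, a i ⊗ₜ[F] (b i ⊗ₜ[F] c i)) :
    Module.finrank F (LinearMap.range (Φ A)) ≤ r * (n₃ - 1).choose p :=
  stmt7_general n₁ n₂ n₃ p r Φ hΦ A a b c hA
end
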